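/- Let A(σ) = A₀ + Σ_{m=1}^d σ_m A_m with A₀, …, A_d ∈ ℝ^{n×n} symmetric, regarded as a function of σ ∈ ℂᵈ, and assume its restriction to a nonempty closed bounded set S ⊆ ℝᵈ is spectrally equivalent to Ā with constants 0 < α ≤ β; assume ρ > 1 and αρ > 1. Let σ ∈ ℂᵈ, let σ_S ∈ S be a point of S at minimal Euclidean distance from σ, set σ_P = σ − σ_S and δA_⊥(σ_P) = Σ_{m=1}^d (σ_P)_m W_⊥ᵀ A_m W_⊥. If max over nonzero x ∈ ℂᵐ of |x* δA_⊥(σ_P) x| / (x* M_⊥ x) < (αρ − 1)Λ, then for every t ∈ (0, Λ) the complex matrix A_⊥(σ) − t M_⊥ has trivial null space, i.e. is invertible. -/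

import Mathlib

/-!
On the `Ā`-orthogonal complement of `Ē`, the Rayleigh quotient `vᵀĀv / vᵀMv` is at least `ρΛ`,
so spectral equivalence at `σ_S` gives `vᵀA(σ_S)v ≥ αρΛ · vᵀMv` there. Splitting
`A⊥(σ) - tM⊥ = A⊥(σ_S) + δA⊥(σ_P) - tM⊥`, the real part of `x*(A⊥(σ) - tM⊥)x` is therefore at
least `(αρΛ - (αρ - 1)Λ - t) · x*M⊥x = (Λ - t) · x*M⊥x > 0` for `x ≠ 0`, so the kernel is trivial.
-/

open Matrix

/-- `Ē`, the span of all eigenvectors `v` of the pencil `(Ā, M)` (`Āv = ξMv`)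
with eigenvalue `ξ ∈ (0, c)`. -/
noncomputable def Ebar {n : ℕ} (Abar M : Matrix (Fin n) (Fin n) ℝ) (c : ℝ) :
    Submodule ℝ (Fin n → ℝ) :=
  Submodule.span ℝ {v : Fin n → ℝ |
    v ≠ 0 ∧ ∃ ξ : ℝ, 0 < ξ ∧ ξ < c ∧ Abar.mulVec v = ξ • M.mulVec v}

/-- Entrywise complexification of a real matrix. -/
noncomputable def cmat {n m : ℕ} (X : Matrix (Fin n) (Fin m) ℝ) : Matrix (Fin n) (Fin m) ℂ :=
  X.map (fun r => (r : ℂ))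

theorem Matrix.dotProduct_transpose_mul_mul_mulVec {R m n : Type*} [CommSemiring R] [Fintype m]
    [Fintype n] (P : Matrix m n R) (Q : Matrix m m R) (x : n → R) :
    x ⬝ᵥ (Pᵀ * Q * P) *ᵥ x = (P *ᵥ x) ⬝ᵥ Q *ᵥ (P *ᵥ x) := by
  rw [← mulVec_mulVec, ← mulVec_mulVec, dotProduct_mulVec, vecMul_transpose]

theorem Matrix.IsHermitian.mul_dotProduct_self_le_of_orthogonal {ι : Type*} [Fintype ι]
    [DecidableEq ι] {B : Matrix ι ι ℝ} (hB : B.IsHermitian) {c : ℝ} {u : ι → ℝ}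
    (hu : ∀ i, hB.eigenvalues i < c → ⇑(hB.eigenvectorBasis i) ⬝ᵥ u = 0) :
    c * (u ⬝ᵥ u) ≤ u ⬝ᵥ B *ᵥ u := by
  set U : Matrix ι ι ℝ := (hB.eigenvectorUnitary : Matrix ι ι ℝ)
  have hstar : star U = Uᵀ := by
    rw [star_eq_conjTranspose, conjTranspose_eq_transpose_of_trivial]
  have hdiag : B = Uᵀᵀ * diagonal hB.eigenvalues * Uᵀ := by
    rw [transpose_transpose, ← hstar]; exact hB.spectral_theorem
  have hone : (1 : Matrix ι ι ℝ) = Uᵀᵀ * 1 * Uᵀ := by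
    rw [transpose_transpose, mul_one, ← hstar]; exact (Unitary.coe_mul_star_self _).symm
  set w := Uᵀ *ᵥ u
  have hw : ∀ i, w i = ⇑(hB.eigenvectorBasis i) ⬝ᵥ u := fun i => by
    simp [w, U, mulVec, dotProduct]
  have hnorm : u ⬝ᵥ u = ∑ i, w i * w i := by
    calc u ⬝ᵥ u = u ⬝ᵥ (Uᵀᵀ * 1 * Uᵀ) *ᵥ u := by rw [← hone, one_mulVec]
      _ = _ := by rw [dotProduct_transpose_mul_mul_mulVec, one_mulVec]; rfl
  have hquad : u ⬝ᵥ B *ᵥ u = ∑ i, hB.eigenvalues i * (w i * w i) := by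
    calc u ⬝ᵥ B *ᵥ u = u ⬝ᵥ (Uᵀᵀ * diagonal hB.eigenvalues * Uᵀ) *ᵥ u := by rw [← hdiag]
      _ = _ := by
        rw [dotProduct_transpose_mul_mul_mulVec]
        simp only [dotProduct, mulVec_diagonal]
        exact Finset.sum_congr rfl fun i _ => by ring
  rw [hnorm, hquad, Finset.mul_sum]
  refine Finset.sum_le_sum fun i _ => ?_
  rcases lt_or_ge (hB.eigenvalues i) c with hi | hi
  · simp [hw i, hu i hi]
  · exact mul_le_mul_of_nonneg_right hi (mul_self_nonneg _)

-- `B = NᵀĀN` is `Ā` in the coordinates `u = Rv` where `M` becomes the identity; an eigenvector `b`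
-- of `B` yields the pencil eigenvector `Nb` of `(Ā, M)` with the same eigenvalue.
theorem mul_dotProduct_mulVec_le_of_orthogonal_Ebar_of_factor {n : ℕ}
    {M Abar R N : Matrix (Fin n) (Fin n) ℝ} (hAbar : Abar.PosDef) (hNR : N * R = 1)
    (hMR : M = Rᵀ * R) {c : ℝ} {v : Fin n → ℝ}
    (hv : ∀ w ∈ Ebar Abar M c, v ⬝ᵥ Abar *ᵥ w = 0) :
    c * (v ⬝ᵥ M *ᵥ v) ≤ v ⬝ᵥ Abar *ᵥ v := by
  have hNRv : ∀ x, N *ᵥ R *ᵥ x = x := fun x => by rw [mulVec_mulVec, hNR, one_mulVec]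
  have hN : Function.Injective N.mulVec := fun x y hxy => by
    have hRN : ∀ x, R *ᵥ N *ᵥ x = x := fun x => by
      rw [mulVec_mulVec, mul_eq_one_comm.mp hNR, one_mulVec]
    rw [← hRN x, ← hRN y, hxy]
  set B := Nᵀ * Abar * N
  have hB : B.PosDef := by
    simpa [conjTranspose_eq_transpose_of_trivial] using hAbar.conjTranspose_mul_mul_same hN
  set u := R *ᵥ v
  have hnorm : u ⬝ᵥ u = v ⬝ᵥ M *ᵥ v := by
    rw [hMR, ← mul_one Rᵀ, dotProduct_transpose_mul_mul_mulVec, one_mulVec]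
  have hquad : u ⬝ᵥ B *ᵥ u = v ⬝ᵥ Abar *ᵥ v := by
    rw [dotProduct_transpose_mul_mul_mulVec, hNRv]
  have horth : ∀ i, hB.isHermitian.eigenvalues i < c → ⇑(hB.isHermitian.eigenvectorBasis i) ⬝ᵥ u = 0 := by
    intro i hi
    set b := ⇑(hB.isHermitian.eigenvectorBasis i)
    set ξ := hB.isHermitian.eigenvalues i
    have hBb : B *ᵥ b = ξ • b := hB.isHermitian.mulVec_eigenvectorBasis i
    have hRB : Rᵀ * B = Abar * N := by
      simp only [B, ← mul_assoc, ← transpose_mul, hNR, transpose_one, one_mul]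
    have hMN : M * N = Rᵀ := by rw [hMR, mul_assoc, mul_eq_one_comm.mp hNR, mul_one]
    have hpencil : Abar *ᵥ (N *ᵥ b) = ξ • M *ᵥ (N *ᵥ b) := by
      rw [mulVec_mulVec, ← hRB, ← mulVec_mulVec, hBb, mulVec_smul, mulVec_mulVec _ M, hMN]
    have hb : b ≠ 0 := by simpa [b] using hB.isHermitian.eigenvectorBasis.orthonormal.ne_zero i
    have hmem : N *ᵥ b ∈ Ebar Abar M c :=
      Submodule.subset_span
        ⟨fun h => hb (hN (h.trans (mulVec_zero N).symm)), ξ, hB.eigenvalues_pos i, hi, hpencil⟩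
    have hξ : ξ * (b ⬝ᵥ u) = v ⬝ᵥ Abar *ᵥ (N *ᵥ b) :=
      calc ξ * (b ⬝ᵥ u) = (B *ᵥ b) ⬝ᵥ u := by rw [hBb, smul_dotProduct, smul_eq_mul]
        _ = (Abar *ᵥ N *ᵥ b) ⬝ᵥ (N *ᵥ u) := by
          simp only [B, ← mulVec_mulVec]
          rw [mulVec_transpose, ← dotProduct_mulVec]
        _ = v ⬝ᵥ Abar *ᵥ (N *ᵥ b) := by rw [hNRv, dotProduct_comm]
    rw [hv _ hmem] at hξ
    exact (mul_eq_zero.mp hξ).resolve_left (hB.eigenvalues_pos i).ne'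
  rw [← hnorm, ← hquad]
  exact hB.isHermitian.mul_dotProduct_self_le_of_orthogonal horth

open scoped MatrixOrder in
theorem mul_dotProduct_mulVec_le_of_orthogonal_Ebar {n : ℕ}
    {M Abar : Matrix (Fin n) (Fin n) ℝ} (hM : M.PosDef) (hAbar : Abar.PosDef) {c : ℝ}
    {v : Fin n → ℝ} (hv : ∀ w ∈ Ebar Abar M c, v ⬝ᵥ Abar *ᵥ w = 0) :
    c * (v ⬝ᵥ M *ᵥ v) ≤ v ⬝ᵥ Abar *ᵥ v := by
  obtain ⟨R, hR, hMR⟩ :=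
    CStarAlgebra.isStrictlyPositive_iff_eq_star_mul_self.mp hM.isStrictlyPositive
  rw [star_eq_conjTranspose, conjTranspose_eq_transpose_of_trivial] at hMR
  exact mul_dotProduct_mulVec_le_of_orthogonal_Ebar_of_factor hAbar
    (nonsing_inv_mul R ((isUnit_iff_isUnit_det R).mp hR)) hMR hv

theorem cmat_mul {n m k : ℕ} (X : Matrix (Fin n) (Fin m) ℝ) (Y : Matrix (Fin m) (Fin k) ℝ) :
    cmat (X * Y) = cmat X * cmat Y :=
  Matrix.map_mul (f := Complex.ofRealHom)

theorem cmat_transpose_mul_mul {n m : ℕ} (W : Matrix (Fin n) (Fin m) ℝ)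
    (Y : Matrix (Fin n) (Fin n) ℝ) : (cmat W)ᵀ * cmat Y * cmat W = cmat (Wᵀ * Y * W) := by
  rw [cmat_mul, cmat_mul]; rfl

theorem cmat_add_sum_smul {n m d : ℕ} (X : Matrix (Fin n) (Fin m) ℝ)
    (Y : Fin d → Matrix (Fin n) (Fin m) ℝ) (τ : Fin d → ℝ) :
    cmat (X + ∑ k, τ k • Y k) = cmat X + ∑ k, (τ k : ℂ) • cmat (Y k) := by
  ext i j; simp [cmat, Matrix.sum_apply]

theorem cmat_transpose_mul_pencil_mul {n m d : ℕ} (W : Matrix (Fin n) (Fin m) ℝ)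
    (A0 M : Matrix (Fin n) (Fin n) ℝ) (Am : Fin d → Matrix (Fin n) (Fin n) ℝ) (σ : Fin d → ℂ)
    (τ : Fin d → ℝ) (t : ℂ) :
    (cmat W)ᵀ * (cmat A0 + ∑ k, σ k • cmat (Am k) - t • cmat M) * cmat W =
      cmat (Wᵀ * (A0 + ∑ k, τ k • Am k) * W) + ∑ k, (σ k - τ k) • cmat (Wᵀ * Am k * W) -
        t • cmat (Wᵀ * M * W) := by
  have hsplit : ∑ k, σ k • cmat (Am k) =
      ∑ k, (τ k : ℂ) • cmat (Am k) + ∑ k, (σ k - τ k) • cmat (Am k) := by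
    rw [← Finset.sum_add_distrib]
    exact Finset.sum_congr rfl fun k _ => by rw [← add_smul, add_sub_cancel]
  rw [← cmat_transpose_mul_mul, cmat_add_sum_smul, hsplit]
  simp only [Matrix.mul_add, Matrix.add_mul, Matrix.mul_sub, Matrix.sub_mul, Matrix.mul_sum,
    Matrix.sum_mul, Matrix.mul_smul, Matrix.smul_mul, cmat_transpose_mul_mul]
  abel

theorem re_star_dotProduct_cmat_mulVec {m : ℕ} (C : Matrix (Fin m) (Fin m) ℝ) (z : Fin m → ℂ) :
    (star z ⬝ᵥ cmat C *ᵥ z).re =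
      (fun i => (z i).re) ⬝ᵥ C *ᵥ (fun i => (z i).re) +
        (fun i => (z i).im) ⬝ᵥ C *ᵥ (fun i => (z i).im) := by
  simp only [dotProduct, mulVec, cmat, map_apply, Complex.re_sum, Finset.mul_sum,
    ← Finset.sum_add_distrib, Pi.star_apply, Complex.mul_re, Complex.mul_im, Complex.ofReal_re,
    Complex.ofReal_im, Complex.star_def, Complex.conj_re, Complex.conj_im]
  refine Finset.sum_congr rfl fun i _ => Finset.sum_congr rfl fun j _ => by ring

theorem mul_dotProduct_mulVec_le_of_columns_orthogonal_Ebar {n m : ℕ}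
    {M Abar A : Matrix (Fin n) (Fin n) ℝ} {W : Matrix (Fin n) (Fin m) ℝ} (hM : M.PosDef)
    (hAbar : Abar.PosDef) {α c : ℝ} (hα : 0 ≤ α) (hA : ∀ v, α * (v ⬝ᵥ Abar *ᵥ v) ≤ v ⬝ᵥ A *ᵥ v)
    (hW : ∀ j, ∀ w ∈ Ebar Abar M c, (fun i => W i j) ⬝ᵥ Abar *ᵥ w = 0) (a : Fin m → ℝ) :
    α * c * (a ⬝ᵥ (Wᵀ * M * W) *ᵥ a) ≤ a ⬝ᵥ (Wᵀ * A * W) *ᵥ a := by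
  rw [dotProduct_transpose_mul_mul_mulVec, dotProduct_transpose_mul_mul_mulVec, mul_assoc]
  have hperp : ∀ w ∈ Ebar Abar M c, W *ᵥ a ⬝ᵥ Abar *ᵥ w = 0 := fun w hw => by
    have hWt : Wᵀ *ᵥ (Abar *ᵥ w) = 0 := funext fun j => hW j w hw
    rw [← vecMul_transpose, ← dotProduct_mulVec, hWt, dotProduct_zero]
  exact (mul_le_mul_of_nonneg_left (mul_dotProduct_mulVec_le_of_orthogonal_Ebar hM hAbar hperp)
    hα).trans (hA _)

theorem mul_re_star_dotProduct_cmat_mulVec_le {m : ℕ} {C C' : Matrix (Fin m) (Fin m) ℝ} {κ : ℝ}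
    (h : ∀ a, κ * (a ⬝ᵥ C *ᵥ a) ≤ a ⬝ᵥ C' *ᵥ a) (z : Fin m → ℂ) :
    κ * (star z ⬝ᵥ cmat C *ᵥ z).re ≤ (star z ⬝ᵥ cmat C' *ᵥ z).re := by
  rw [re_star_dotProduct_cmat_mulVec, re_star_dotProduct_cmat_mulVec, mul_add]
  exact add_le_add (h _) (h _)

theorem re_star_dotProduct_cmat_mulVec_pos {m : ℕ} {C : Matrix (Fin m) (Fin m) ℝ}
    (hC : ∀ a, a ≠ 0 → 0 < a ⬝ᵥ C *ᵥ a) {z : Fin m → ℂ} (hz : z ≠ 0) :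
    0 < (star z ⬝ᵥ cmat C *ᵥ z).re := by
  have hC' : ∀ a, 0 ≤ a ⬝ᵥ C *ᵥ a := fun a => by
    rcases eq_or_ne a 0 with rfl | ha
    · simp
    · exact (hC a ha).le
  rw [re_star_dotProduct_cmat_mulVec]
  by_cases hre : (fun i => (z i).re) = 0
  · have him : (fun i => (z i).im) ≠ 0 := fun him =>
      hz (funext fun i => Complex.ext (congrFun hre i) (congrFun him i))
    exact add_pos_of_nonneg_of_pos (hC' _) (hC _ him)
  · exact add_pos_of_pos_of_nonneg (hC _ hre) (hC' _)

theorem re_star_dotProduct_add_sub_smul_mulVec_pos {ι : Type*} [Fintype ι]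
    {P D Q : Matrix ι ι ℂ} {κ Λ t : ℝ} {z : ι → ℂ}
    (hP : κ * (star z ⬝ᵥ Q *ᵥ z).re ≤ (star z ⬝ᵥ P *ᵥ z).re)
    (hD : ‖star z ⬝ᵥ D *ᵥ z‖ < (κ - Λ) * (star z ⬝ᵥ Q *ᵥ z).re)
    (hQ : 0 < (star z ⬝ᵥ Q *ᵥ z).re) (ht : t < Λ) :
    0 < (star z ⬝ᵥ (P + D - (t : ℂ) • Q) *ᵥ z).re := by
  have hDre : -(star z ⬝ᵥ D *ᵥ z).re ≤ ‖star z ⬝ᵥ D *ᵥ z‖ :=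
    (neg_le_abs _).trans (Complex.abs_re_le_norm _)
  have htQ : t * (star z ⬝ᵥ Q *ᵥ z).re < Λ * (star z ⬝ᵥ Q *ᵥ z).re :=
    mul_lt_mul_of_pos_right ht hQ
  simp only [sub_mulVec, add_mulVec, smul_mulVec, dotProduct_sub, dotProduct_add,
    dotProduct_smul, smul_eq_mul, Complex.sub_re, Complex.add_re, Complex.re_ofReal_mul]
  nlinarith

theorem Matrix.eq_zero_of_mulVec_eq_zero_and_isUnit_of_re_pos {ι : Type*} [Fintype ι]
    [DecidableEq ι] {T : Matrix ι ι ℂ} (hT : ∀ z, z ≠ 0 → 0 < (star z ⬝ᵥ T *ᵥ z).re) :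
    (∀ z, T *ᵥ z = 0 → z = 0) ∧ IsUnit T := by
  have hker : ∀ z, T *ᵥ z = 0 → z = 0 := fun z hz => by
    by_contra hne
    simpa [hz] using hT z hne
  exact ⟨hker, mulVec_injective_iff_isUnit.mp fun x y hxy =>
    sub_eq_zero.mp (hker _ (by rw [mulVec_sub, hxy, sub_self]))⟩

theorem stmt_11_general {n m d : ℕ} (S : Set (Fin d → ℝ))
    (M Abar : Matrix (Fin n) (Fin n) ℝ) (hM : M.PosDef) (hAbar : Abar.PosDef)
    (A0 : Matrix (Fin n) (Fin n) ℝ) (Am : Fin d → Matrix (Fin n) (Fin n) ℝ)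
    (α β Λ ρ : ℝ) (hα : 0 < α)
    (hspec : ∀ σ ∈ S, ∀ v : Fin n → ℝ,
      α * (v ⬝ᵥ Abar.mulVec v) ≤ v ⬝ᵥ (A0 + ∑ k, σ k • Am k).mulVec v ∧
        v ⬝ᵥ (A0 + ∑ k, σ k • Am k).mulVec v ≤ β * (v ⬝ᵥ Abar.mulVec v))
    (Wperp : Matrix (Fin n) (Fin m) ℝ)
    (hWmem : ∀ j, ∀ w ∈ Ebar Abar M (ρ * Λ), (fun i => Wperp i j) ⬝ᵥ Abar.mulVec w = 0)
    (hWli : ∀ c : Fin m → ℝ, Wperp.mulVec c = 0 → c = 0)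
    (σ : Fin d → ℂ) (σS : Fin d → ℝ) (hσS : σS ∈ S)
    -- `max_{0 ≠ x ∈ ℂᵐ} |x* δA⊥(σ_P) x| / (x* M⊥ x) < (αρ - 1)Λ`:
    (hsmall : ∀ x : Fin m → ℂ, x ≠ 0 →
      ‖star x ⬝ᵥ
          (∑ k, (σ k - (σS k : ℂ)) • cmat (Wperpᵀ * Am k * Wperp)).mulVec x‖ /
        (star x ⬝ᵥ (cmat (Wperpᵀ * M * Wperp)).mulVec x).re < (α * ρ - 1) * Λ)
    (t : ℝ) (ht : t ∈ Set.Ioo 0 Λ) :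
    (∀ z : Fin m → ℂ,
        ((cmat Wperp)ᵀ * (cmat A0 + ∑ k, σ k • cmat (Am k) - (t : ℂ) • cmat M) *
            cmat Wperp).mulVec z = 0 → z = 0) ∧
      IsUnit ((cmat Wperp)ᵀ * (cmat A0 + ∑ k, σ k • cmat (Am k) - (t : ℂ) • cmat M) *
        cmat Wperp) := by
  set AS := A0 + ∑ k, σS k • Am k
  have hlow := mul_dotProduct_mulVec_le_of_columns_orthogonal_Ebar (A := AS) hM hAbar hα.le
    (fun v => (hspec σS hσS v).1) hWmem
  have hpos : ∀ a, a ≠ 0 → 0 < a ⬝ᵥ (Wperpᵀ * M * Wperp) *ᵥ a := fun a ha => by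
    rw [dotProduct_transpose_mul_mul_mulVec]
    exact hM.dotProduct_mulVec_pos fun h => ha (hWli a h)
  refine Matrix.eq_zero_of_mulVec_eq_zero_and_isUnit_of_re_pos fun z hz => ?_
  rw [cmat_transpose_mul_pencil_mul _ _ _ _ _ σS]
  have hq := re_star_dotProduct_cmat_mulVec_pos hpos hz
  have hD := (div_lt_iff₀ hq).mp (hsmall z hz)
  exact re_star_dotProduct_add_sub_smul_mulVec_pos
    (mul_re_star_dotProduct_cmat_mulVec_le hlow z) (hD.trans_eq (by ring)) hq ht.2

/-- for `σ ∈ ℂᵈ` with nearest point `σ_S ∈ S` and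
`σ_P = σ - σ_S`, if `max_{0 ≠ x ∈ ℂᵐ} |x* δA⊥(σ_P) x| / (x* M⊥ x) < (αρ - 1)Λ`,
then for every `t ∈ (0,Λ)` the complex matrix `A⊥(σ) - t M⊥` has trivial null
space, i.e. is invertible. -/
theorem stmt_11 {n m d : ℕ} (S : Set (Fin d → ℝ)) (hSne : S.Nonempty)
    (hScl : IsClosed S) (hSbd : Bornology.IsBounded S)
    (M Abar : Matrix (Fin n) (Fin n) ℝ) (hM : M.PosDef) (hAbar : Abar.PosDef)
    (A0 : Matrix (Fin n) (Fin n) ℝ) (Am : Fin d → Matrix (Fin n) (Fin n) ℝ)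
    (hA0 : A0.IsSymm) (hAm : ∀ k, (Am k).IsSymm)
    (hApd : ∀ σ ∈ S, (A0 + ∑ k, σ k • Am k).PosDef)
    (α β Λ ρ : ℝ) (hα : 0 < α) (hαβ : α ≤ β) (hΛ : 0 < Λ) (hρ : 1 < ρ) (hαρ : 1 < α * ρ)
    (hspec : ∀ σ ∈ S, ∀ v : Fin n → ℝ,
      α * (v ⬝ᵥ Abar.mulVec v) ≤ v ⬝ᵥ (A0 + ∑ k, σ k • Am k).mulVec v ∧
        v ⬝ᵥ (A0 + ∑ k, σ k • Am k).mulVec v ≤ β * (v ⬝ᵥ Abar.mulVec v))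
    (Wperp : Matrix (Fin n) (Fin m) ℝ)
    (hWmem : ∀ j, ∀ w ∈ Ebar Abar M (ρ * Λ), (fun i => Wperp i j) ⬝ᵥ Abar.mulVec w = 0)
    (hWspan : ∀ v : Fin n → ℝ,
      (∀ w ∈ Ebar Abar M (ρ * Λ), v ⬝ᵥ Abar.mulVec w = 0) → ∃ c, v = Wperp.mulVec c)
    (hWli : ∀ c : Fin m → ℝ, Wperp.mulVec c = 0 → c = 0)
    (σ : Fin d → ℂ) (σS : Fin d → ℝ) (hσS : σS ∈ S)
    -- `σ_S` is a closest point of `S` to `σ` (Euclidean distance):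
    (hmin : ∀ τ ∈ S, ∑ k, ‖σ k - (σS k : ℂ)‖ ^ 2 ≤
      ∑ k, ‖σ k - (τ k : ℂ)‖ ^ 2)
    -- `max_{0 ≠ x ∈ ℂᵐ} |x* δA⊥(σ_P) x| / (x* M⊥ x) < (αρ - 1)Λ`:
    (hsmall : ∀ x : Fin m → ℂ, x ≠ 0 →
      ‖star x ⬝ᵥ
          (∑ k, (σ k - (σS k : ℂ)) • cmat (Wperpᵀ * Am k * Wperp)).mulVec x‖ /
        (star x ⬝ᵥ (cmat (Wperpᵀ * M * Wperp)).mulVec x).re < (α * ρ - 1) * Λ)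
    (t : ℝ) (ht : t ∈ Set.Ioo 0 Λ) :
    (∀ z : Fin m → ℂ,
        ((cmat Wperp)ᵀ * (cmat A0 + ∑ k, σ k • cmat (Am k) - (t : ℂ) • cmat M) *
            cmat Wperp).mulVec z = 0 → z = 0) ∧
      IsUnit ((cmat Wperp)ᵀ * (cmat A0 + ∑ k, σ k • cmat (Am k) - (t : ℂ) • cmat M) *
        cmat Wperp) :=
  stmt_11_general S M Abar hM hAbar A0 Am α β Λ ρ hα hspec Wperp hWmem hWli σ σS hσS hsmall t ht
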